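/- Non-convex FedProx convergence (bounded variance). Assume each F k is differentiable with L-Lipschitz gradient and satisfies the curvature lower bound with constant L₋, where 0 ≤ L₋ < μ and μ̄ := μ − L₋ > 0. Let wᵗ ∈ E satisfy ‖∇f(wᵗ)‖² ≥ ε for some ε > 0, and assume the bounded variance condition ∑ k, p k·‖∇F k (wᵗ) − ∇f(wᵗ)‖² ≤ σ². For each device k let w k⁺ be a γ-inexact solution of min h k (0 ≤ γ ≤ 1), let K ≥ 1, and set C := √(1 + σ²/ε) and ρ := 1/μ − (γ/μ + √2·(1+γ)/(μ̄·√K) + L·(1+γ)/(μ̄·μ))·C − (L·(1+γ)²/(2μ̄²) + L·(1+γ)²·(2√(2K)+2)/(μ̄²·K))·C². Then ∑_{s : Fin K → Fin N} (∏ j, p (s j)) · f((1/K)·∑ j, w (s j)⁺) ≤ f(wᵗ) − ρ·‖∇f(wᵗ)‖². -/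

import Mathlib

/-!
Semi-convexity makes `∇F k + μ • id` strongly monotone with modulus `μ - L₋`, so a `γ`-inexact
proximal step moves by at most `(1 + γ) / (μ - L₋) * ‖∇F k wᵗ‖` and leaves a residual
`μ • (w k⁺ - wᵗ) + ∇F k wᵗ` of norm at most `(γ + L (1 + γ) / (μ - L₋)) * ‖∇F k wᵗ‖`.
Bounded variance and `ε ≤ ‖∇f wᵗ‖²` bound the `p`-mean square of `‖∇F k wᵗ‖` by
`C² ‖∇f wᵗ‖²`. The descent lemma at `wᵗ` towards the full-participation average
`∑ p k • w k⁺` gives the first-order decrease; sampling `K` devices i.i.d. adds at most `L / (2K)`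
times the `p`-variance of the `w k⁺`, because the sample mean is unbiased and the cross terms of
distinct draws vanish.
-/

open Set
open scoped RealInnerProductSpace NNReal

section Calculus

variable {E : Type*} [NormedAddCommGroup E] [InnerProductSpace ℝ E] [CompleteSpace E]
  {φ : E → ℝ}

theorem hasDerivAt_comp_lineMap (hφ : Differentiable ℝ φ) (x y : E) (t : ℝ) :
    HasDerivAt (fun t ↦ φ (AffineMap.lineMap x y t))
      ⟪gradient φ (AffineMap.lineMap x y t), y - x⟫ t :=
  (hφ _).hasGradientAt.hasFDerivAt.comp_hasDerivAt t AffineMap.hasDerivAt_lineMap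

theorem neg_mul_norm_sq_le_inner_gradient_sub {m : ℝ} (hφ : Differentiable ℝ φ)
    (hconv : ConvexOn ℝ univ fun w ↦ φ w + m / 2 * ‖w‖ ^ 2) (u v : E) :
    -(m * ‖u - v‖ ^ 2) ≤ ⟪gradient φ u - gradient φ v, u - v⟫ := by
  set ℓ := AffineMap.lineMap (k := ℝ) v u
  have hderiv (t : ℝ) : HasDerivAt (fun t ↦ φ (ℓ t) + m / 2 * ‖ℓ t‖ ^ 2)
      (⟪gradient φ (ℓ t), u - v⟫ + m / 2 * (2 * ⟪ℓ t, u - v⟫)) t :=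
    (hasDerivAt_comp_lineMap hφ v u t).add (AffineMap.hasDerivAt_lineMap.norm_sq.const_mul _)
  have hline : ConvexOn ℝ univ fun t ↦ φ (ℓ t) + m / 2 * ‖ℓ t‖ ^ 2 := by
    have := hconv.comp_affineMap ℓ
    rwa [preimage_univ] at this
  have hmono := (hline.le_slope_of_hasDerivAt (mem_univ 0) (mem_univ 1) one_pos (hderiv 0)).trans
    (hline.slope_le_of_hasDerivAt (mem_univ 0) (mem_univ 1) one_pos (hderiv 1))
  simp only [ℓ, AffineMap.lineMap_apply_zero, AffineMap.lineMap_apply_one] at hmono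
  have hsq : ⟪u, u - v⟫ - ⟪v, u - v⟫ = ‖u - v‖ ^ 2 := by
    rw [← inner_sub_left, real_inner_self_eq_norm_sq]
  rw [inner_sub_left]
  linear_combination hmono + m * hsq

theorem le_add_inner_gradient_add_mul_norm_sq {L : ℝ≥0} (hφ : Differentiable ℝ φ)
    (hlip : LipschitzWith L (gradient φ)) (x y : E) :
    φ y ≤ φ x + ⟪gradient φ x, y - x⟫ + L / 2 * ‖y - x‖ ^ 2 := by
  set ℓ := AffineMap.lineMap (k := ℝ) x y
  set h : ℝ → ℝ := fun t ↦ φ (ℓ t) - t * ⟪gradient φ x, y - x⟫ - L / 2 * ‖y - x‖ ^ 2 * t ^ 2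
  have hderiv (t : ℝ) : HasDerivAt h
      (⟪gradient φ (ℓ t), y - x⟫ - ⟪gradient φ x, y - x⟫ - L / 2 * ‖y - x‖ ^ 2 * (2 * t)) t := by
    refine (((hasDerivAt_comp_lineMap hφ x y t).sub ((hasDerivAt_id t).mul_const _)).sub
      (((hasDerivAt_id t).pow 2).const_mul _)).congr_deriv ?_
    simp only [id, one_mul, mul_one]
    ring
  have hdiff : Differentiable ℝ h := fun t ↦ (hderiv t).differentiableAt
  have hanti : AntitoneOn h (Icc 0 1) := by
    refine antitoneOn_of_deriv_nonpos (convex_Icc 0 1) hdiff.continuous.continuousOn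
      hdiff.differentiableOn fun t ht ↦ ?_
    rw [interior_Icc] at ht
    have hlipt : ‖gradient φ (ℓ t) - gradient φ x‖ ≤ L * (t * ‖y - x‖) := by
      have hℓ : ℓ t - x = t • (y - x) := AffineMap.lineMap_vsub_left x y t
      simpa only [hℓ, norm_smul, Real.norm_of_nonneg ht.1.le] using hlip.norm_sub_le (ℓ t) x
    have hcs := real_inner_le_norm (gradient φ (ℓ t) - gradient φ x) (y - x)
    rw [inner_sub_left] at hcs
    rw [(hderiv t).deriv]
    nlinarith [mul_le_mul_of_nonneg_right hlipt (norm_nonneg (y - x))]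
  have := hanti (left_mem_Icc.2 zero_le_one) (right_mem_Icc.2 zero_le_one) zero_le_one
  simp only [h, ℓ, AffineMap.lineMap_apply_zero, AffineMap.lineMap_apply_one] at this
  linarith

theorem hasGradientAt_of_eq_sum_mul {ι : Type*} [Fintype ι] {p : ι → ℝ} {F : ι → E → ℝ}
    (hF : ∀ k, Differentiable ℝ (F k)) (hφ : ∀ w, φ w = ∑ k, p k * F k w) (x : E) :
    HasGradientAt φ (∑ k, p k • gradient (F k) x) x := by
  rw [funext hφ, hasGradientAt_iff_hasFDerivAt, map_sum]
  simp only [map_smul]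
  exact HasFDerivAt.fun_sum fun k _ ↦ (hF k x).hasGradientAt.hasFDerivAt.const_mul (p k)

end Calculus

section WeightedAverages

variable {ι : Type*} [Fintype ι] {p : ι → ℝ}

theorem sq_sum_mul_le_sum_mul_sq (hp : ∀ k, 0 ≤ p k) (hp1 : ∑ k, p k = 1) (a : ι → ℝ) :
    (∑ k, p k * a k) ^ 2 ≤ ∑ k, p k * a k ^ 2 := by
  simpa using even_two.convexOn_pow.map_sum_le (t := Finset.univ) (p := a) (fun k _ ↦ hp k) hp1
    fun k _ ↦ mem_univ _

theorem sum_mul_le_of_sum_mul_sq_le (hp : ∀ k, 0 ≤ p k) (hp1 : ∑ k, p k = 1) {a : ι → ℝ}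
    {M : ℝ} (hM : 0 ≤ M) (h : ∑ k, p k * a k ^ 2 ≤ M ^ 2) : ∑ k, p k * a k ≤ M :=
  le_of_sq_le_sq ((sq_sum_mul_le_sum_mul_sq hp hp1 a).trans h) hM

variable {E : Type*} [SeminormedAddCommGroup E]

theorem sum_mul_norm_sq_le_mul_sum (hp : ∀ k, 0 ≤ p k) {v : ι → E} {a : ι → ℝ} {c : ℝ}
    (hv : ∀ k, ‖v k‖ ≤ c * a k) : ∑ k, p k * ‖v k‖ ^ 2 ≤ c ^ 2 * ∑ k, p k * a k ^ 2 := by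
  rw [Finset.mul_sum]
  refine Finset.sum_le_sum fun k _ ↦ ?_
  rw [mul_left_comm, ← mul_pow]
  exact mul_le_mul_of_nonneg_left (pow_le_pow_left₀ (norm_nonneg _) (hv k) 2) (hp k)

variable [NormedSpace ℝ E]

theorem lipschitzWith_sum_smul {X : Type*} [PseudoMetricSpace X] (hp : ∀ k, 0 ≤ p k)
    (hp1 : ∑ k, p k = 1) {L : ℝ≥0} {g : ι → X → E} (hg : ∀ k, LipschitzWith L (g k)) :
    LipschitzWith L fun x ↦ ∑ k, p k • g k x := by
  refine LipschitzWith.of_dist_le_mul fun x y ↦ ?_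
  rw [dist_eq_norm, ← Finset.sum_sub_distrib]
  calc ‖∑ k, (p k • g k x - p k • g k y)‖
      ≤ ∑ k, p k * (L * dist x y) := by
        refine (norm_sum_le _ _).trans (Finset.sum_le_sum fun k _ ↦ ?_)
        rw [← smul_sub, norm_smul, Real.norm_of_nonneg (hp k), ← dist_eq_norm]
        exact mul_le_mul_of_nonneg_left ((hg k).dist_le_mul x y) (hp k)
    _ = L * dist x y := by rw [← Finset.sum_mul, hp1, one_mul]

theorem norm_sum_smul_le_mul_sum (hp : ∀ k, 0 ≤ p k) {v : ι → E} {a : ι → ℝ} {c : ℝ}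
    (hv : ∀ k, ‖v k‖ ≤ c * a k) : ‖∑ k, p k • v k‖ ≤ c * ∑ k, p k * a k := by
  rw [Finset.mul_sum]
  refine (norm_sum_le _ _).trans (Finset.sum_le_sum fun k _ ↦ ?_)
  rw [norm_smul, Real.norm_of_nonneg (hp k), mul_left_comm]
  exact mul_le_mul_of_nonneg_left (hv k) (hp k)

end WeightedAverages

section InnerProduct

variable {E : Type*} [NormedAddCommGroup E] [InnerProductSpace ℝ E]
  {ι : Type*} [Fintype ι] {p : ι → ℝ}

theorem sum_mul_norm_sq_eq_add_norm_sq (hp1 : ∑ k, p k = 1) (x : ι → E) :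
    ∑ k, p k * ‖x k‖ ^ 2 = ∑ k, p k * ‖x k - ∑ l, p l • x l‖ ^ 2 + ‖∑ l, p l • x l‖ ^ 2 := by
  set m := ∑ l, p l • x l
  have hcross : ∑ k, p k * ⟪x k - m, m⟫ = 0 := by
    simp only [← real_inner_smul_left, ← sum_inner, smul_sub, Finset.sum_sub_distrib,
      ← Finset.sum_smul, hp1, one_smul, m, sub_self, inner_zero_left]
  have hexpand (k : ι) : ‖x k‖ ^ 2 = ‖x k - m‖ ^ 2 + 2 * ⟪x k - m, m⟫ + ‖m‖ ^ 2 := by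
    rw [← norm_add_sq_real, sub_add_cancel]
  simp only [hexpand, mul_add, Finset.sum_add_distrib, ← Finset.sum_mul, hp1, one_mul,
    mul_left_comm (p _) (2 : ℝ), ← Finset.mul_sum, hcross, mul_zero, add_zero]

theorem sum_mul_norm_sq_le_of_variance_le (hp1 : ∑ k, p k = 1) {g : ι → E} {σ ε : ℝ}
    (hvar : ∑ k, p k * ‖g k - ∑ l, p l • g l‖ ^ 2 ≤ σ ^ 2) (hε : 0 < ε)
    (hgrad : ε ≤ ‖∑ l, p l • g l‖ ^ 2) :
    ∑ k, p k * ‖g k‖ ^ 2 ≤ (1 + σ ^ 2 / ε) * ‖∑ l, p l • g l‖ ^ 2 := by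
  have : σ ^ 2 ≤ σ ^ 2 / ε * ‖∑ l, p l • g l‖ ^ 2 := by
    rw [div_mul_eq_mul_div, le_div_iff₀ hε]
    exact mul_le_mul_of_nonneg_left hgrad (sq_nonneg σ)
  rw [sum_mul_norm_sq_eq_add_norm_sq hp1]
  linarith

theorem inner_le_of_norm_smul_add_le {g Δ : E} {μ e : ℝ} (hμ : 0 < μ) (h : ‖μ • Δ + g‖ ≤ e) :
    ⟪g, Δ⟫ ≤ (‖g‖ * e - ‖g‖ ^ 2) / μ := by
  have hcs := (real_inner_le_norm g (μ • Δ + g)).trans (mul_le_mul_of_nonneg_left h (norm_nonneg g))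
  rw [inner_add_right, real_inner_smul_right, real_inner_self_eq_norm_sq] at hcs
  rw [le_div_iff₀ hμ]
  linarith

end InnerProduct

section Sampling

variable {ι : Type*} [Fintype ι] {p : ι → ℝ} {K : ℕ}

theorem sum_prod_eq_one (hp1 : ∑ k, p k = 1) : ∑ s : Fin K → ι, ∏ j, p (s j) = 1 := by
  rw [← Fintype.prod_sum (fun _ k ↦ p k), hp1, Finset.prod_const_one]

theorem sum_fin_succ_prod_mul (g : (Fin (K + 1) → ι) → ℝ) :
    ∑ s : Fin (K + 1) → ι, (∏ j, p (s j)) * g s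
      = ∑ k, p k * ∑ s : Fin K → ι, (∏ j, p (s j)) * g (Fin.cons k s) := by
  rw [← (Fin.consEquiv fun _ ↦ ι).sum_comp, Fintype.sum_prod_type]
  simp [Fin.consEquiv, Fin.prod_univ_succ, Finset.mul_sum, mul_assoc]

variable {E : Type*} [NormedAddCommGroup E] [InnerProductSpace ℝ E]

theorem sum_prod_mul_inner_sum_eq_zero (hp1 : ∑ k, p k = 1) {Y : ι → E}
    (hY : ∑ k, p k • Y k = 0) (z : E) :
    ∑ s : Fin K → ι, (∏ j, p (s j)) * ⟪z, ∑ j, Y (s j)⟫ = 0 := by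
  induction K with
  | zero => simp
  | succ K ih =>
    have hz : ∑ k, p k * ⟪z, Y k⟫ = 0 := by
      simp only [← real_inner_smul_right, ← inner_sum, hY, inner_zero_right]
    simp only [sum_fin_succ_prod_mul, Fin.sum_univ_succ, Fin.cons_zero, Fin.cons_succ,
      inner_add_right, mul_add, Finset.sum_add_distrib, ih, ← Finset.sum_mul,
      sum_prod_eq_one hp1, one_mul, hz, mul_zero, Finset.sum_const_zero, add_zero]

theorem sum_prod_mul_norm_sum_sq (hp1 : ∑ k, p k = 1) {Y : ι → E} (hY : ∑ k, p k • Y k = 0) :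
    ∑ s : Fin K → ι, (∏ j, p (s j)) * ‖∑ j, Y (s j)‖ ^ 2 = K * ∑ k, p k * ‖Y k‖ ^ 2 := by
  induction K with
  | zero => simp
  | succ K ih =>
    have hk (k : ι) : ∑ s : Fin K → ι, (∏ j, p (s j)) * ‖Y k + ∑ j, Y (s j)‖ ^ 2
        = ‖Y k‖ ^ 2 + K * ∑ k, p k * ‖Y k‖ ^ 2 := by
      simp only [norm_add_sq_real, mul_add, Finset.sum_add_distrib, ← Finset.sum_mul,
        sum_prod_eq_one hp1, one_mul, mul_left_comm _ (2 : ℝ), ← Finset.mul_sum,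
        sum_prod_mul_inner_sum_eq_zero hp1 hY, mul_zero, add_zero, ih]
    simp only [sum_fin_succ_prod_mul, Fin.sum_univ_succ, Fin.cons_zero, Fin.cons_succ, hk,
      mul_add, Finset.sum_add_distrib, ← Finset.sum_mul, hp1, one_mul]
    push_cast
    ring

variable [CompleteSpace E] {φ : E → ℝ} {L : ℝ≥0}

theorem sum_prod_mul_apply_sampleMean_le_apply_mean (hφ : Differentiable ℝ φ)
    (hlip : LipschitzWith L (gradient φ)) (hp : ∀ k, 0 ≤ p k) (hp1 : ∑ k, p k = 1) (hK : K ≠ 0)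
    (x : ι → E) :
    ∑ s : Fin K → ι, (∏ j, p (s j)) * φ ((1 / (K : ℝ)) • ∑ j, x (s j))
      ≤ φ (∑ k, p k • x k) + L / (2 * K) * ∑ k, p k * ‖x k - ∑ l, p l • x l‖ ^ 2 := by
  set m := ∑ l, p l • x l
  have hY : ∑ k, p k • (x k - m) = 0 := by
    simp only [smul_sub, Finset.sum_sub_distrib, ← Finset.sum_smul, hp1, one_smul, m, sub_self]
  have hdev (s : Fin K → ι) :
      (1 / (K : ℝ)) • ∑ j, x (s j) - m = (1 / (K : ℝ)) • ∑ j, (x (s j) - m) := by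
    rw [Finset.sum_sub_distrib, smul_sub, Finset.sum_const, Finset.card_univ, Fintype.card_fin,
      ← Nat.cast_smul_eq_nsmul ℝ, smul_smul, one_div_mul_cancel (Nat.cast_ne_zero.2 hK),
      one_smul]
  have hdescent (s : Fin K → ι) : φ ((1 / (K : ℝ)) • ∑ j, x (s j)) ≤ φ m
      + 1 / K * ⟪gradient φ m, ∑ j, (x (s j) - m)⟫
      + L / (2 * K ^ 2) * ‖∑ j, (x (s j) - m)‖ ^ 2 := by
    have := le_add_inner_gradient_add_mul_norm_sq hφ hlip m ((1 / (K : ℝ)) • ∑ j, x (s j))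
    rw [hdev, real_inner_smul_right, norm_smul, mul_pow, Real.norm_of_nonneg (by positivity)]
      at this
    convert this using 2
    field_simp
  calc ∑ s : Fin K → ι, (∏ j, p (s j)) * φ ((1 / (K : ℝ)) • ∑ j, x (s j))
      ≤ ∑ s : Fin K → ι, (∏ j, p (s j)) * (φ m + 1 / K * ⟪gradient φ m, ∑ j, (x (s j) - m)⟫
          + L / (2 * K ^ 2) * ‖∑ j, (x (s j) - m)‖ ^ 2) :=
        Finset.sum_le_sum fun s _ ↦ mul_le_mul_of_nonneg_left (hdescent s)
          (Finset.prod_nonneg fun j _ ↦ hp (s j))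
    _ = φ m + L / (2 * K) * ∑ k, p k * ‖x k - m‖ ^ 2 := by
      simp only [mul_add, Finset.sum_add_distrib, ← Finset.sum_mul, sum_prod_eq_one hp1, one_mul,
        mul_left_comm _ (1 / (K : ℝ)), mul_left_comm _ (L / (2 * (K : ℝ) ^ 2)), ← Finset.mul_sum,
        sum_prod_mul_inner_sum_eq_zero hp1 hY, sum_prod_mul_norm_sum_sq hp1 hY, mul_zero, add_zero]
      field_simp

theorem sum_prod_mul_apply_sampleMean_le (hφ : Differentiable ℝ φ)
    (hlip : LipschitzWith L (gradient φ)) (hp : ∀ k, 0 ≤ p k) (hp1 : ∑ k, p k = 1) (hK : K ≠ 0)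
    (x : ι → E) (w : E) :
    ∑ s : Fin K → ι, (∏ j, p (s j)) * φ ((1 / (K : ℝ)) • ∑ j, x (s j))
      ≤ φ w + ⟪gradient φ w, ∑ k, p k • (x k - w)⟫ + L / 2 * ‖∑ k, p k • (x k - w)‖ ^ 2
        + L / (2 * K) * ∑ k, p k * ‖x k - w‖ ^ 2 := by
  have hmean : ∑ k, p k • (x k - w) = ∑ k, p k • x k - w := by
    simp only [smul_sub, Finset.sum_sub_distrib, ← Finset.sum_smul, hp1, one_smul]
  have hcenter (k : ι) : x k - w - ∑ l, p l • (x l - w) = x k - ∑ l, p l • x l := by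
    rw [hmean]; abel
  have hvar := sum_mul_norm_sq_eq_add_norm_sq hp1 fun k ↦ x k - w
  have hdescent := le_add_inner_gradient_add_mul_norm_sq hφ hlip w (∑ k, p k • x k)
  simp only [hcenter] at hvar
  rw [← hmean] at hdescent
  have : L / (2 * K) * ∑ k, p k * ‖x k - ∑ l, p l • x l‖ ^ 2
      ≤ L / (2 * K) * ∑ k, p k * ‖x k - w‖ ^ 2 :=
    mul_le_mul_of_nonneg_left (by linarith [sq_nonneg ‖∑ k, p k • (x k - w)‖]) (by positivity)
  linarith [sum_prod_mul_apply_sampleMean_le_apply_mean hφ hlip hp hp1 hK x]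

theorem sum_prod_mul_apply_sampleMean_le_of_local_bounds (hφ : Differentiable ℝ φ)
    (hlip : LipschitzWith L (gradient φ)) (hp : ∀ k, 0 ≤ p k) (hp1 : ∑ k, p k = 1) (hK : K ≠ 0)
    {w : E} {g x : ι → E} (hg : gradient φ w = ∑ k, p k • g k) {μ c e C : ℝ} (hμ : 0 < μ)
    (hc : 0 ≤ c) (he : 0 ≤ e) (hC : 0 ≤ C) (hstep : ∀ k, ‖x k - w‖ ≤ c * ‖g k‖)
    (hres : ∀ k, ‖μ • (x k - w) + g k‖ ≤ e * ‖g k‖)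
    (hB : ∑ k, p k * ‖g k‖ ^ 2 ≤ (C * ‖gradient φ w‖) ^ 2) :
    ∑ s : Fin K → ι, (∏ j, p (s j)) * φ ((1 / (K : ℝ)) • ∑ j, x (s j))
      ≤ φ w - (1 / μ - e * C / μ - L / 2 * c ^ 2 * C ^ 2 - L / (2 * K) * c ^ 2 * C ^ 2)
        * ‖gradient φ w‖ ^ 2 := by
  set G := ‖gradient φ w‖
  have hA := sum_mul_le_of_sum_mul_sq_le hp hp1 (mul_nonneg hC (norm_nonneg _)) hB
  have hΔ : ‖∑ k, p k • (x k - w)‖ ≤ c * (C * G) :=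
    (norm_sum_smul_le_mul_sum hp hstep).trans (by gcongr)
  have hΔsq := pow_le_pow_left₀ (norm_nonneg _) hΔ 2
  have hD : ∑ k, p k * ‖x k - w‖ ^ 2 ≤ c ^ 2 * (C * G) ^ 2 :=
    (sum_mul_norm_sq_le_mul_sum hp hstep).trans (by gcongr)
  have hinner : ⟪gradient φ w, ∑ k, p k • (x k - w)⟫ ≤ (G * (e * (C * G)) - G ^ 2) / μ := by
    refine inner_le_of_norm_smul_add_le hμ ?_
    have hsplit : μ • ∑ k, p k • (x k - w) + gradient φ w = ∑ k, p k • (μ • (x k - w) + g k) := by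
      simp only [hg, Finset.smul_sum, smul_add, Finset.sum_add_distrib, smul_comm μ]
    rw [hsplit]
    exact (norm_sum_smul_le_mul_sum hp hres).trans (by gcongr)
  linear_combination sum_prod_mul_apply_sampleMean_le hφ hlip hp hp1 hK x w + hinner
    + L / 2 * hΔsq + L / (2 * K) * hD

end Sampling

section ProximalStep

variable {E : Type*} [NormedAddCommGroup E] [InnerProductSpace ℝ E]

theorem mul_norm_le_of_inexact {a b d : E} {m μ γ : ℝ} (hmono : -(m * ‖d‖ ^ 2) ≤ ⟪a - b, d⟫)
    (hinexact : ‖a + μ • d‖ ≤ γ * ‖b‖) : (μ - m) * ‖d‖ ≤ (1 + γ) * ‖b‖ := by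
  have hupper := (real_inner_le_norm (a + μ • d) d).trans
    (mul_le_mul_of_nonneg_right hinexact (norm_nonneg d))
  have hb := neg_le_of_abs_le (abs_real_inner_le_norm b d)
  rw [inner_add_left, real_inner_smul_left, real_inner_self_eq_norm_sq] at hupper
  rw [inner_sub_left] at hmono
  rcases (norm_nonneg d).eq_or_lt with hd | hd
  · -- `hinexact` forces `0 ≤ γ * ‖b‖`, so no sign condition on `γ` is needed
    rw [← hd, mul_zero]
    nlinarith [norm_nonneg (a + μ • d), norm_nonneg b]
  · refine le_of_mul_le_mul_right ?_ hd
    nlinarith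

variable [CompleteSpace E] {F : E → ℝ} {μ γ : ℝ} {w w' : E}

theorem norm_prox_step_le {Lm : ℝ} (hF : Differentiable ℝ F)
    (hcurv : ConvexOn ℝ univ fun w ↦ F w + Lm / 2 * ‖w‖ ^ 2) (hμ : Lm < μ)
    (hinexact : ‖gradient F w' + μ • (w' - w)‖ ≤ γ * ‖gradient F w‖) :
    ‖w' - w‖ ≤ (1 + γ) / (μ - Lm) * ‖gradient F w‖ := by
  rw [div_mul_eq_mul_div, le_div_iff₀ (sub_pos.2 hμ), mul_comm]
  exact mul_norm_le_of_inexact (neg_mul_norm_sq_le_inner_gradient_sub hF hcurv _ _) hinexact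

theorem norm_prox_residual_le {L : ℝ≥0} (hlip : LipschitzWith L (gradient F)) {c : ℝ}
    (hinexact : ‖gradient F w' + μ • (w' - w)‖ ≤ γ * ‖gradient F w‖)
    (hstep : ‖w' - w‖ ≤ c * ‖gradient F w‖) :
    ‖μ • (w' - w) + gradient F w‖ ≤ (γ + L * c) * ‖gradient F w‖ :=
  calc ‖μ • (w' - w) + gradient F w‖
      = ‖(gradient F w' + μ • (w' - w)) - (gradient F w' - gradient F w)‖ := by abel_nf
    _ ≤ γ * ‖gradient F w‖ + L * ‖w' - w‖ :=
      (norm_sub_le _ _).trans (add_le_add hinexact (hlip.norm_sub_le _ _))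
    _ ≤ γ * ‖gradient F w‖ + L * (c * ‖gradient F w‖) := by gcongr
    _ = (γ + L * c) * ‖gradient F w‖ := by ring

end ProximalStep

theorem fedprox_rate_le {L γ μ Lm C : ℝ} (hL : 0 ≤ L) (hγ : 0 ≤ γ) (hμ : Lm < μ) (hC : 0 ≤ C)
    (K : ℕ) :
    1 / μ - (γ / μ + Real.sqrt 2 * (1 + γ) / ((μ - Lm) * Real.sqrt K)
        + L * (1 + γ) / ((μ - Lm) * μ)) * C
      - (L * (1 + γ) ^ 2 / (2 * (μ - Lm) ^ 2)
        + L * (1 + γ) ^ 2 * (2 * Real.sqrt (2 * K) + 2) / ((μ - Lm) ^ 2 * K)) * C ^ 2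
    ≤ 1 / μ - (γ + L * ((1 + γ) / (μ - Lm))) * C / μ - L / 2 * ((1 + γ) / (μ - Lm)) ^ 2 * C ^ 2
      - L / (2 * K) * ((1 + γ) / (μ - Lm)) ^ 2 * C ^ 2 := by
  have hμ' : 0 < μ - Lm := sub_pos.2 hμ
  generalize μ - Lm = a at *
  have hK : L * (1 + γ) ^ 2 / (2 * a ^ 2 * K)
      ≤ L * (1 + γ) ^ 2 * (2 * Real.sqrt (2 * K) + 2) / (a ^ 2 * K) := by
    calc L * (1 + γ) ^ 2 / (2 * a ^ 2 * K)
        = L * (1 + γ) ^ 2 / (a ^ 2 * K) * (1 / 2) := by ring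
      _ ≤ L * (1 + γ) ^ 2 / (a ^ 2 * K) * (2 * Real.sqrt (2 * K) + 2) :=
        mul_le_mul_of_nonneg_left (by linarith [Real.sqrt_nonneg (2 * K)]) (by positivity)
      _ = _ := by ring
  calc _ ≤ 1 / μ - (γ / μ + L * (1 + γ) / (a * μ)) * C
        - (L * (1 + γ) ^ 2 / (2 * a ^ 2) + L * (1 + γ) ^ 2 / (2 * a ^ 2 * K)) * C ^ 2 := by
        gcongr
        exact le_add_of_nonneg_right (by positivity)
    _ = _ := by ring

theorem fedprox_bounded_variance_descent_general
    {E : Type*} [NormedAddCommGroup E] [InnerProductSpace ℝ E] [CompleteSpace E]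
    {N : ℕ} (p : Fin N → ℝ)
    (hp : ∀ k, 0 ≤ p k) (hp1 : ∑ k, p k = 1)
    (F : Fin N → E → ℝ) (f : E → ℝ) (hf : ∀ w, f w = ∑ k, p k * F k w)
    {L : ℝ} (hL : 0 ≤ L)
    (hFdiff : ∀ k, Differentiable ℝ (F k))
    (hFlip : ∀ k, LipschitzWith (Real.toNNReal L) (gradient (F k)))
    {Lm μ : ℝ} (hLm : 0 ≤ Lm) (hμ : Lm < μ)
    (hcurv : ∀ k, ConvexOn ℝ Set.univ (fun w => F k w + (Lm / 2) * ‖w‖ ^ 2))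
    (wt : E) {ε : ℝ} (hε : 0 < ε) (hgrad : ε ≤ ‖gradient f wt‖ ^ 2)
    {σ : ℝ}
    (hvar : ∑ k, p k * ‖gradient (F k) wt - gradient f wt‖ ^ 2 ≤ σ ^ 2)
    {γ : ℝ} (hγ0 : 0 ≤ γ)
    (wplus : Fin N → E)
    (hinexact : ∀ k,
      ‖gradient (F k) (wplus k) + μ • (wplus k - wt)‖ ≤ γ * ‖gradient (F k) wt‖)
    {K : ℕ} (hK : 1 ≤ K)
    (C ρ : ℝ) (hC : C = Real.sqrt (1 + σ ^ 2 / ε))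
    (hρ : ρ = 1 / μ
        - (γ / μ + Real.sqrt 2 * (1 + γ) / ((μ - Lm) * Real.sqrt K)
            + L * (1 + γ) / ((μ - Lm) * μ)) * C
        - (L * (1 + γ) ^ 2 / (2 * (μ - Lm) ^ 2)
            + L * (1 + γ) ^ 2 * (2 * Real.sqrt (2 * K) + 2) / ((μ - Lm) ^ 2 * K)) * C ^ 2) :
    ∑ s : Fin K → Fin N, (∏ j, p (s j)) * f ((1 / (K : ℝ)) • ∑ j, wplus (s j))
      ≤ f wt - ρ * ‖gradient f wt‖ ^ 2 := by
  have hμ0 : 0 < μ := hLm.trans_lt hμ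
  have hc : 0 ≤ (1 + γ) / (μ - Lm) := div_nonneg (by linarith) (sub_pos.2 hμ).le
  have hC0 : 0 ≤ C := hC ▸ Real.sqrt_nonneg _
  have hgradf (w : E) := (hasGradientAt_of_eq_sum_mul hFdiff hf w).gradient
  have hfdiff : Differentiable ℝ f := fun w ↦
    (hasGradientAt_of_eq_sum_mul hFdiff hf w).differentiableAt
  have hflip : LipschitzWith L.toNNReal (gradient f) := by
    rw [funext hgradf]; exact lipschitzWith_sum_smul hp hp1 hFlip
  have hstep (k : Fin N) := norm_prox_step_le (hFdiff k) (hcurv k) hμ (hinexact k)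
  have hres (k : Fin N) := norm_prox_residual_le (hFlip k) (hinexact k) (hstep k)
  simp only [Real.coe_toNNReal L hL] at hres
  have hB : ∑ k, p k * ‖gradient (F k) wt‖ ^ 2 ≤ (C * ‖gradient f wt‖) ^ 2 := by
    rw [mul_pow, hC, Real.sq_sqrt (by positivity)]
    rw [hgradf] at hvar hgrad ⊢
    exact sum_mul_norm_sq_le_of_variance_le hp1 hvar hε hgrad
  have hround := sum_prod_mul_apply_sampleMean_le_of_local_bounds hfdiff hflip hp hp1
    (K := K) (by omega) (hgradf wt) hμ0 hc (add_nonneg hγ0 (mul_nonneg hL hc)) hC0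
    hstep hres hB
  rw [Real.coe_toNNReal L hL] at hround
  have hrate := fedprox_rate_le hL hγ0 hμ hC0 K
  rw [← hρ] at hrate
  linear_combination hround + ‖gradient f wt‖ ^ 2 * hrate

/-- Non-convex FedProx convergence under a bounded variance assumption. -/
theorem fedprox_bounded_variance_descent
    {E : Type*} [NormedAddCommGroup E] [InnerProductSpace ℝ E] [CompleteSpace E]
    {N : ℕ} (hN : 1 ≤ N) (p : Fin N → ℝ)
    (hp : ∀ k, 0 ≤ p k) (hp1 : ∑ k, p k = 1)
    (F : Fin N → E → ℝ) (f : E → ℝ) (hf : ∀ w, f w = ∑ k, p k * F k w)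
    {L : ℝ} (hL : 0 ≤ L)
    (hFdiff : ∀ k, Differentiable ℝ (F k))
    (hFlip : ∀ k, LipschitzWith (Real.toNNReal L) (gradient (F k)))
    {Lm μ : ℝ} (hLm : 0 ≤ Lm) (hμ : Lm < μ)
    (hcurv : ∀ k, ConvexOn ℝ Set.univ (fun w => F k w + (Lm / 2) * ‖w‖ ^ 2))
    (wt : E) {ε : ℝ} (hε : 0 < ε) (hgrad : ε ≤ ‖gradient f wt‖ ^ 2)
    {σ : ℝ}
    (hvar : ∑ k, p k * ‖gradient (F k) wt - gradient f wt‖ ^ 2 ≤ σ ^ 2)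
    {γ : ℝ} (hγ0 : 0 ≤ γ) (hγ1 : γ ≤ 1)
    (wplus : Fin N → E)
    (hinexact : ∀ k,
      ‖gradient (F k) (wplus k) + μ • (wplus k - wt)‖ ≤ γ * ‖gradient (F k) wt‖)
    {K : ℕ} (hK : 1 ≤ K)
    (C ρ : ℝ) (hC : C = Real.sqrt (1 + σ ^ 2 / ε))
    (hρ : ρ = 1 / μ
        - (γ / μ + Real.sqrt 2 * (1 + γ) / ((μ - Lm) * Real.sqrt K)
            + L * (1 + γ) / ((μ - Lm) * μ)) * C
        - (L * (1 + γ) ^ 2 / (2 * (μ - Lm) ^ 2)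
            + L * (1 + γ) ^ 2 * (2 * Real.sqrt (2 * K) + 2) / ((μ - Lm) ^ 2 * K)) * C ^ 2) :
    ∑ s : Fin K → Fin N, (∏ j, p (s j)) * f ((1 / (K : ℝ)) • ∑ j, wplus (s j))
      ≤ f wt - ρ * ‖gradient f wt‖ ^ 2 :=
  fedprox_bounded_variance_descent_general p hp hp1 F f hf hL hFdiff hFlip hLm hμ hcurv wt hε hgrad
    hvar hγ0 wplus hinexact hK C ρ hC hρ
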